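/- arXiv:2301.09529 — 12 statements merged into one kernel-verified Lean document; each statement's English description precedes it below -/
import Mathlib

section
/- Let (P, ≤, ', 0, 1) be an orthogonal mlb-complete poset with x → y := { y ∨ m | m ∈ Max L(x', y') }. If x ≤ y then for every u ∈ y → z there exists v ∈ x → z with u ≤ v (i.e., y → z ≤₁ x → z). -/
/-- The set of maximal elements of the lower cone `L(a,b)`. -/
def MaxL {P : Type*} [PartialOrder P] (a b : P) : Set P :=
  {m | m ≤ a ∧ m ≤ b ∧ ∀ z, z ≤ a → z ≤ b → m ≤ z → z = m}

/-- The implication operator `x → y := { y ∨ m | m ∈ Max L(x', y') }`,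
where `y ∨ m` is expressed via `IsLUB`. -/
def parrow {P : Type*} [PartialOrder P] (c : P → P) (x y : P) : Set P :=
  {w | ∃ m ∈ MaxL (c x) (c y), IsLUB {y, m} w}

/-! Shrinking `x` enlarges `x'`, so a maximal lower bound of `y', z'` is still a lower bound of
`x', z'`; mlb-completeness lifts it to a maximal one, and joining with `z` is monotone. -/

section

variable {P : Type*} [PartialOrder P]

theorem exists_mem_maxL_ge
    (hMlb : ∀ (M : Finset P) (x : P), (∀ m ∈ M, x ≤ m) →
      ∃ z, x ≤ z ∧ (∀ m ∈ M, z ≤ m) ∧ ∀ w, (∀ m ∈ M, w ≤ m) → z ≤ w → w = z)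
    {a b m : P} (ha : m ≤ a) (hb : m ≤ b) : ∃ m' ∈ MaxL a b, m ≤ m' := by
  classical
  have lb_pair {w : P} : (∀ t ∈ ({a, b} : Finset P), w ≤ t) ↔ w ≤ a ∧ w ≤ b := by
    simp only [Finset.mem_insert, Finset.mem_singleton, forall_eq_or_imp, forall_eq]
  obtain ⟨m', hmm', hm'ab, hmax⟩ := hMlb {a, b} m (lb_pair.2 ⟨ha, hb⟩)
  obtain ⟨hm'a, hm'b⟩ := lb_pair.1 hm'ab
  exact ⟨m', ⟨hm'a, hm'b, fun w hwa hwb => hmax w (lb_pair.2 ⟨hwa, hwb⟩)⟩, hmm'⟩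

theorem IsLUB.pair_le_of_le {z m m' u v : P} (hu : IsLUB {z, m} u) (hv : IsLUB {z, m'} v)
    (hmm' : m ≤ m') : u ≤ v :=
  hu.2 <| by
    rintro t (rfl | rfl)
    · exact hv.1 (Set.mem_insert _ _)
    · exact hmm'.trans (hv.1 (Set.mem_insert_of_mem _ rfl))

end

theorem stmt_2_general {P : Type*} [PartialOrder P] (c : P → P)
    (hA : ∀ x y : P, x ≤ y → c y ≤ c x)
    (hOrth : ∀ x y : P, x ≤ c y → ∃ s, IsLUB {x, y} s)
    (hMlb : ∀ (M : Finset P) (x : P), (∀ m ∈ M, x ≤ m) →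
      ∃ z, x ≤ z ∧ (∀ m ∈ M, z ≤ m) ∧ ∀ w, (∀ m ∈ M, w ≤ m) → z ≤ w → w = z)
    (x y z : P) (hxy : x ≤ y) :
    ∀ u ∈ parrow c y z, ∃ v ∈ parrow c x z, u ≤ v := by
  rintro u ⟨m, hm, hu⟩
  obtain ⟨m', hm', hmm'⟩ :=
    exists_mem_maxL_ge hMlb (hm.1.trans (hA x y hxy)) hm.2.1
  obtain ⟨v, hv⟩ := hOrth m' z hm'.2.1
  rw [Set.pair_comm] at hv
  exact ⟨v, ⟨m', hm', hv⟩, hu.pair_le_of_le hv hmm'⟩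

theorem stmt_2 {P : Type*} [PartialOrder P] [BoundedOrder P] (c : P → P)
    (hA : ∀ x y : P, x ≤ y → c y ≤ c x) (hI : ∀ x : P, c (c x) = x)
    (hOrth : ∀ x y : P, x ≤ c y → ∃ s, IsLUB {x, y} s)
    (hMlb : ∀ (M : Finset P) (x : P), (∀ m ∈ M, x ≤ m) →
      ∃ z, x ≤ z ∧ (∀ m ∈ M, z ≤ m) ∧ ∀ w, (∀ m ∈ M, w ≤ m) → z ≤ w → w = z)
    (x y z : P) (hxy : x ≤ y) :
    ∀ u ∈ parrow c y z, ∃ v ∈ parrow c x z, u ≤ v :=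
  stmt_2_general c hA hOrth hMlb x y z hxy
end

section
/- Let (P, ≤, ', 0, 1) be an orthogonal mlb-complete poset with x → y := { y ∨ m | m ∈ Max L(x', y') }. If x ≤ y then x → y = { y ∨ y' }; if x ≤ y' then x → y = { y ∨ (x' ∧ y') } whenever x' ∧ y' exists as a meet; and if y ≤ x then x → y = { x' ∨ y }. -/
section MaxL

variable {P : Type*} [PartialOrder P]

theorem MaxL_eq_singleton_of_isGLB {a b m : P} (hm : IsGLB {a, b} m) : MaxL a b = {m} := by
  have hma : m ≤ a := hm.1 (Set.mem_insert _ _)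
  have hmb : m ≤ b := hm.1 (Set.mem_insert_of_mem _ rfl)
  have le_m : ∀ {z}, z ≤ a → z ≤ b → z ≤ m := fun hza hzb =>
    hm.2 (by rintro w (rfl | rfl) <;> assumption)
  ext m'
  constructor
  · rintro ⟨hm'a, hm'b, hmax⟩
    exact (hmax m hma hmb (le_m hm'a hm'b)).symm
  · rintro rfl
    exact ⟨hma, hmb, fun z hza hzb hmz => le_antisymm (le_m hza hzb) hmz⟩

theorem isGLB_pair_of_le {a b : P} (h : b ≤ a) : IsGLB {a, b} b :=
  ⟨by simp [h], fun _ hz => hz (Set.mem_insert_of_mem _ rfl)⟩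

theorem MaxL_eq_singleton_of_le {a b : P} (h : b ≤ a) : MaxL a b = {b} :=
  MaxL_eq_singleton_of_isGLB (isGLB_pair_of_le h)

theorem MaxL_comm (a b : P) : MaxL a b = MaxL b a := by
  ext m
  exact ⟨fun ⟨ha, hb, hmax⟩ => ⟨hb, ha, fun z hzb hza => hmax z hza hzb⟩,
    fun ⟨hb, ha, hmax⟩ => ⟨ha, hb, fun z hza hzb => hmax z hzb hza⟩⟩

end MaxL

theorem parrow_eq_singleton {P : Type*} [PartialOrder P] {c : P → P} {x y m j : P}
    (h : MaxL (c x) (c y) = {m}) (hj : IsLUB {y, m} j) : parrow c x y = {j} := by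
  ext w
  simp only [parrow, h, Set.mem_singleton_iff, exists_eq_left]
  exact ⟨fun hw => hw.unique hj, fun hw => hw ▸ hj⟩

theorem stmt_3_general {P : Type*} [PartialOrder P] (c : P → P)
    (hA : ∀ x y : P, x ≤ y → c y ≤ c x) :
    (∀ x y j : P, x ≤ y → IsLUB {y, c y} j → parrow c x y = {j}) ∧
    (∀ x y m j : P, x ≤ c y → IsGLB {c x, c y} m → IsLUB {y, m} j →
      parrow c x y = {j}) ∧
    (∀ x y j : P, y ≤ x → IsLUB {c x, y} j → parrow c x y = {j}) := by
  refine ⟨fun x y j hxy hj => ?_, fun x y m j _ hm hj => ?_, fun x y j hyx hj => ?_⟩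
  · exact parrow_eq_singleton (MaxL_eq_singleton_of_le (hA x y hxy)) hj
  · exact parrow_eq_singleton (MaxL_eq_singleton_of_isGLB hm) hj
  · rw [Set.pair_comm] at hj
    exact parrow_eq_singleton
      (by rw [MaxL_comm]; exact MaxL_eq_singleton_of_le (hA y x hyx)) hj

theorem stmt_3 {P : Type*} [PartialOrder P] [BoundedOrder P] (c : P → P)
    (hA : ∀ x y : P, x ≤ y → c y ≤ c x) (hI : ∀ x : P, c (c x) = x)
    (hOrth : ∀ x y : P, x ≤ c y → ∃ s, IsLUB {x, y} s)
    (hMlb : ∀ (M : Finset P) (x : P), (∀ m ∈ M, x ≤ m) →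
      ∃ z, x ≤ z ∧ (∀ m ∈ M, z ≤ m) ∧ ∀ w, (∀ m ∈ M, w ≤ m) → z ≤ w → w = z) :
    (∀ x y j : P, x ≤ y → IsLUB {y, c y} j → parrow c x y = {j}) ∧
    (∀ x y m j : P, x ≤ c y → IsGLB {c x, c y} m → IsLUB {y, m} j →
      parrow c x y = {j}) ∧
    (∀ x y j : P, y ≤ x → IsLUB {c x, y} j → parrow c x y = {j}) :=
  stmt_3_general c hA
end

section
/- Let (P, ≤, ', 0, 1) be a sharply paraorthomodular mlb-complete poset with x → y := { y ∨ m | m ∈ Max L(x', y') }. Then for every b ∈ P, b' → b = {b}. -/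
theorem isLUB_pair_of_le {α : Type*} [Preorder α] {a b : α} (h : b ≤ a) : IsLUB {a, b} a :=
  IsGreatest.isLUB ⟨Set.mem_insert a {b}, by simp [upperBounds_insert, h]⟩

section

variable {P : Type*} [PartialOrder P]

theorem exists_mem_MaxL_of_mlbComplete
    (hMlb : ∀ (M : Finset P) (x : P), (∀ m ∈ M, x ≤ m) →
      ∃ z, x ≤ z ∧ (∀ m ∈ M, z ≤ m) ∧ ∀ w, (∀ m ∈ M, w ≤ m) → z ≤ w → w = z)
    {a b x : P} (ha : x ≤ a) (hb : x ≤ b) : ∃ m ∈ MaxL a b, x ≤ m := by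
  classical
  obtain ⟨m, hxm, hm, hmax⟩ := hMlb {a, b} x (by simp [ha, hb])
  simp only [Finset.mem_insert, Finset.mem_singleton, forall_eq_or_imp, forall_eq] at hm hmax
  exact ⟨m, ⟨hm.1, hm.2, fun z hza hzb hmz => hmax z ⟨hza, hzb⟩ hmz⟩, hxm⟩

variable {c : P → P} {x y : P}

theorem parrow_subset_singleton (h : c x ≤ y) : parrow c x y ⊆ {y} := by
  rintro w ⟨m, ⟨hmx, -, -⟩, hw⟩
  exact hw.unique (isLUB_pair_of_le (hmx.trans h))

theorem parrow_eq_singleton_s4 (h : c x ≤ y) (hne : (MaxL (c x) (c y)).Nonempty) :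
    parrow c x y = {y} := by
  refine (parrow_subset_singleton h).antisymm (Set.singleton_subset_iff.mpr ?_)
  obtain ⟨m, hm⟩ := hne
  exact ⟨m, hm, isLUB_pair_of_le (hm.1.trans h)⟩

end

theorem stmt_4_general {P : Type*} [PartialOrder P] [BoundedOrder P] (c : P → P)
    (hI : ∀ x : P, c (c x) = x)
    (hMlb : ∀ (M : Finset P) (x : P), (∀ m ∈ M, x ≤ m) →
      ∃ z, x ≤ z ∧ (∀ m ∈ M, z ≤ m) ∧ ∀ w, (∀ m ∈ M, w ≤ m) → z ≤ w → w = z) :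
    ∀ b : P, parrow c (c b) b = {b} := by
  intro b
  obtain ⟨m, hm, -⟩ := exists_mem_MaxL_of_mlbComplete hMlb (bot_le (a := c (c b))) bot_le
  exact parrow_eq_singleton_s4 (hI b).le ⟨m, hm⟩

theorem stmt_4 {P : Type*} [PartialOrder P] [BoundedOrder P] (c : P → P)
    (hA : ∀ x y : P, x ≤ y → c y ≤ c x) (hI : ∀ x : P, c (c x) = x)
    (hOrth : ∀ x y : P, x ≤ c y → ∃ s, IsLUB {x, y} s)
    (hP : ∀ x y : P, x ≤ y → IsGLB {c x, y} ⊥ → x = y)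
    (hMlb : ∀ (M : Finset P) (x : P), (∀ m ∈ M, x ≤ m) →
      ∃ z, x ≤ z ∧ (∀ m ∈ M, z ≤ m) ∧ ∀ w, (∀ m ∈ M, w ≤ m) → z ≤ w → w = z) :
    ∀ b : P, parrow c (c b) b = {b} :=
  stmt_4_general c hI hMlb
end

section
/- Let (P, ≤, ', 0, 1) be a sharply paraorthomodular mlb-complete poset with x → y := { y ∨ m | m ∈ Max L(x', y') }. Then a → b = {1} implies a ≤ b. -/
section AntitoneInvolution

variable {P : Type*} [PartialOrder P] {c : P → P}

theorem Antitone.le_apply_of_le_apply (hc : Antitone c) (hc' : Function.Involutive c)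
    {x y : P} (h : x ≤ c y) : y ≤ c x :=
  hc' y ▸ hc h

theorem Antitone.isGLB_pair_of_isLUB_pair (hc : Antitone c) (hc' : Function.Involutive c)
    {x y s : P} (h : IsLUB {x, y} s) : IsGLB {c x, c y} (c s) := by
  refine ⟨?_, fun z hz => ?_⟩
  · rintro _ (rfl | rfl)
    exacts [hc (h.1 (by simp)), hc (h.1 (by simp))]
  · have hxz : x ≤ c z := hc.le_apply_of_le_apply hc' (hz (by simp))
    have hyz : y ≤ c z := hc.le_apply_of_le_apply hc' (hz (by simp))
    exact hc.le_apply_of_le_apply hc' (h.2 (by rintro _ (rfl | rfl) <;> assumption))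

theorem Antitone.apply_top_eq_bot [BoundedOrder P] (hc : Antitone c)
    (hc' : Function.Involutive c) : c ⊤ = ⊥ :=
  le_bot_iff.1 (hc' ⊥ ▸ hc (le_top : c ⊥ ≤ ⊤))

end AntitoneInvolution

theorem stmt_6_general {P : Type*} [PartialOrder P] [BoundedOrder P] (c : P → P)
    (hA : ∀ x y : P, x ≤ y → c y ≤ c x) (hI : ∀ x : P, c (c x) = x)
    (hP : ∀ x y : P, x ≤ y → IsGLB {c x, y} ⊥ → x = y)
    (a b : P) (h : parrow c a b = {⊤}) : a ≤ b := by
  have hc : Antitone c := fun x y => hA x y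
  obtain ⟨m, ⟨hma, hmb, -⟩, hsup⟩ : ⊤ ∈ parrow c a b := h ▸ rfl
  have hinf : IsGLB {c m, c b} ⊥ := by
    rw [Set.pair_comm, ← hc.apply_top_eq_bot hI]
    exact hc.isGLB_pair_of_isLUB_pair hI hsup
  have hm : m = c b := hP m (c b) hmb hinf
  simpa [hm, hI] using hc.le_apply_of_le_apply hI hma

theorem stmt_6 {P : Type*} [PartialOrder P] [BoundedOrder P] (c : P → P)
    (hA : ∀ x y : P, x ≤ y → c y ≤ c x) (hI : ∀ x : P, c (c x) = x)
    (hOrth : ∀ x y : P, x ≤ c y → ∃ s, IsLUB {x, y} s)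
    (hP : ∀ x y : P, x ≤ y → IsGLB {c x, y} ⊥ → x = y)
    (hMlb : ∀ (M : Finset P) (x : P), (∀ m ∈ M, x ≤ m) →
      ∃ z, x ≤ z ∧ (∀ m ∈ M, z ≤ m) ∧ ∀ w, (∀ m ∈ M, w ≤ m) → z ≤ w → w = z)
    (a b : P) (h : parrow c a b = {⊤}) : a ≤ b :=
  stmt_6_general c hA hI hP a b h
end

section
/- In any Kleene lattice, x ∧ y = 0 implies x ≤ y'. -/
/-! Regularity gives `y ⊓ y' ≤ x ⊔ x'`; since `x` is disjoint from `y`, this forces `y ⊓ y' ≤ x'`,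
that is `x ≤ y ⊔ y'` after applying the involution. Distributivity then moves `x` from
`y ⊔ y'` into `y'`, again because `x` is disjoint from `y`. -/

open Function

theorem map_inf_of_antitone_of_involutive {L : Type*} [Lattice L] {c : L → L}
    (hA : Antitone c) (hI : Involutive c) (a b : L) : c (a ⊓ b) = c a ⊔ c b := by
  refine le_antisymm ?_ (sup_le (hA inf_le_left) (hA inf_le_right))
  have h : c (c a ⊔ c b) ≤ a ⊓ b :=
    le_inf ((hA le_sup_left).trans (hI a).le) ((hA le_sup_right).trans (hI b).le)
  simpa only [hI _] using hA h

theorem inf_map_le_map_of_disjoint {L : Type*} [DistribLattice L] [OrderBot L] {c : L → L}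
    (hReg : ∀ x y : L, x ⊓ c x ≤ y ⊔ c y) {x y : L} (h : Disjoint x y) : y ⊓ c y ≤ c x :=
  Disjoint.left_le_of_le_sup_left (hReg y x) (h.symm.mono_left inf_le_left)

theorem stmt_9_general {L : Type*} [DistribLattice L] [BoundedOrder L] (c : L → L)
    (hA : ∀ x y : L, x ≤ y → c y ≤ c x) (hI : ∀ x : L, c (c x) = x)
    (hReg : ∀ x y : L, x ⊓ c x ≤ y ⊔ c y)
    (x y : L) (h : x ⊓ y = ⊥) : x ≤ c y := by
  have hxy : Disjoint x y := disjoint_iff.mpr h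
  have hx : x ≤ y ⊔ c y := by
    have := hA _ _ (inf_map_le_map_of_disjoint hReg hxy)
    rwa [hI, map_inf_of_antitone_of_involutive (fun a b => hA a b) hI, hI, sup_comm] at this
  exact Disjoint.left_le_of_le_sup_left hx hxy

/-- In any Kleene lattice (bounded distributive lattice with antitone involution,
paraorthomodular and regular), `x ∧ y = 0` implies `x ≤ y'`. -/
theorem stmt_9 {L : Type*} [DistribLattice L] [BoundedOrder L] (c : L → L)
    (hA : ∀ x y : L, x ≤ y → c y ≤ c x) (hI : ∀ x : L, c (c x) = x)
    (hP : ∀ x y : L, x ≤ y → c x ⊓ y = ⊥ → x = y)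
    (hReg : ∀ x y : L, x ⊓ c x ≤ y ⊔ c y)
    (x y : L) (h : x ⊓ y = ⊥) : x ≤ c y :=
  stmt_9_general c hA hI hReg x y h
end

section
/- An atomic amalgam of a pasted family of Kleene lattices is a paraorthomodular poset. -/
/-- A pasted family of finite Kleene lattices over a common carrier `K`,
indexed by `ι`.  Each block `blk i` carries a bounded distributive lattice
structure `(le i, inf i, sup i, bot, top)` with an antitone involution `compl`
which is paraorthomodular and regular (i.e. each block is a Kleene lattice)
and has at least 6 elements.  Any two distinct blocks intersect either in
`{bot, top}` or in a common atomic Kleene subalgebra of at most 4 elements on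
which the operations coincide and whose elements other than `bot`, `top` are
simultaneously atoms or simultaneously coatoms of both blocks. -/
structure PastedFamily (K : Type*) (ι : Type*) where
  blk : ι → Set K
  cover : ∀ x : K, ∃ i, x ∈ blk i
  le : ι → K → K → Prop
  inf : ι → K → K → K
  sup : ι → K → K → K
  compl : K → K
  bot : K
  top : K
  bot_mem : ∀ i, bot ∈ blk i
  top_mem : ∀ i, top ∈ blk i
  finite : ∀ i, (blk i).Finite
  card6 : ∀ i, 6 ≤ (blk i).ncard
  le_refl : ∀ i x, x ∈ blk i → le i x x
  le_antisymm' : ∀ i x y, le i x y → le i y x → x = y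
  le_trans' : ∀ i x y z, le i x y → le i y z → le i x z
  bot_le : ∀ i x, x ∈ blk i → le i bot x
  le_top : ∀ i x, x ∈ blk i → le i x top
  inf_mem : ∀ i x y, x ∈ blk i → y ∈ blk i → inf i x y ∈ blk i
  sup_mem : ∀ i x y, x ∈ blk i → y ∈ blk i → sup i x y ∈ blk i
  inf_le_left : ∀ i x y, x ∈ blk i → y ∈ blk i → le i (inf i x y) x
  inf_le_right : ∀ i x y, x ∈ blk i → y ∈ blk i → le i (inf i x y) y
  le_inf : ∀ i x y z, x ∈ blk i → y ∈ blk i → z ∈ blk i →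
    le i z x → le i z y → le i z (inf i x y)
  le_sup_left : ∀ i x y, x ∈ blk i → y ∈ blk i → le i x (sup i x y)
  le_sup_right : ∀ i x y, x ∈ blk i → y ∈ blk i → le i y (sup i x y)
  sup_le : ∀ i x y z, x ∈ blk i → y ∈ blk i → z ∈ blk i →
    le i x z → le i y z → le i (sup i x y) z
  distrib : ∀ i x y z, x ∈ blk i → y ∈ blk i → z ∈ blk i →
    inf i x (sup i y z) = sup i (inf i x y) (inf i x z)
  compl_mem : ∀ i x, x ∈ blk i → compl x ∈ blk i
  compl_antitone : ∀ i x y, x ∈ blk i → y ∈ blk i → le i x y →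
    le i (compl y) (compl x)
  compl_invol : ∀ x, compl (compl x) = x
  /-- Each block is paraorthomodular. -/
  blockParaOM : ∀ i x y, x ∈ blk i → y ∈ blk i → le i x y →
    inf i (compl x) y = bot → x = y
  /-- Each block is regular (Kleene condition). -/
  regular : ∀ i x y, x ∈ blk i → y ∈ blk i →
    le i (inf i x (compl x)) (sup i y (compl y))
  /-- The block orders agree on intersections of blocks. -/
  le_compat : ∀ i j x y, x ∈ blk i → y ∈ blk i → x ∈ blk j → y ∈ blk j →
    le i x y → le j x y
  /-- Pasting condition on the intersection of two distinct blocks. -/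
  inter : ∀ i j, i ≠ j → blk i ∩ blk j = {bot, top} ∨
    ((blk i ∩ blk j).ncard ≤ 4 ∧
     bot ∈ blk i ∩ blk j ∧ top ∈ blk i ∩ blk j ∧
     (∀ x ∈ blk i ∩ blk j, compl x ∈ blk i ∩ blk j) ∧
     (∀ x y, x ∈ blk i ∩ blk j → y ∈ blk i ∩ blk j →
       inf i x y = inf j x y ∧ inf i x y ∈ blk i ∩ blk j ∧
       sup i x y = sup j x y ∧ sup i x y ∈ blk i ∩ blk j) ∧
     (∀ x ∈ blk i ∩ blk j, x ≠ bot → x ≠ top →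
       ((x ≠ bot ∧ ∀ z ∈ blk i, le i z x → z = bot ∨ z = x) ∧
        (x ≠ bot ∧ ∀ z ∈ blk j, le j z x → z = bot ∨ z = x)) ∨
       ((x ≠ top ∧ ∀ z ∈ blk i, le i x z → z = top ∨ z = x) ∧
        (x ≠ top ∧ ∀ z ∈ blk j, le j x z → z = top ∨ z = x))))

namespace PastedFamily

variable {K ι : Type*} (A : PastedFamily K ι)

/-- The order of the atomic amalgam: `x ≤ y` iff `x ≤ y` in some block. -/
def gle (x y : K) : Prop := ∃ i, x ∈ A.blk i ∧ y ∈ A.blk i ∧ A.le i x y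

/-- `s` is the least upper bound of `x` and `y` in the amalgam. -/
def IsLubA (x y s : K) : Prop :=
  A.gle x s ∧ A.gle y s ∧ ∀ z, A.gle x z → A.gle y z → A.gle s z

/-- `m` is the greatest lower bound of `x` and `y` in the amalgam. -/
def IsGlbA (x y m : K) : Prop :=
  A.gle m x ∧ A.gle m y ∧ ∀ z, A.gle z x → A.gle z y → A.gle z m

/-- Paraorthomodularity of the amalgam: `x ≤ y` and `x' ∧ y = 0`
(i.e. the lower cone `L(x', y)` is `{0}`) imply `x = y`. -/
def ParaOM : Prop := ∀ x y, A.gle x y →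
  (∀ z, A.gle z (A.compl x) → A.gle z y → z = A.bot) → x = y

/-- Blocks `i, j, k` form an atomic loop of order 3: consecutive (cyclic)
intersections have exactly 4 elements and the triple intersection is `{0,1}`. -/
def AtomicLoop3 (i j k : ι) : Prop :=
  (A.blk i ∩ A.blk j).ncard = 4 ∧ (A.blk j ∩ A.blk k).ncard = 4 ∧
  (A.blk k ∩ A.blk i).ncard = 4 ∧
  A.blk i ∩ A.blk j ∩ A.blk k = {A.bot, A.top}

/-- Blocks `i, j, k, l` form an atomic loop of order 4. -/
def AtomicLoop4 (i j k l : ι) : Prop :=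
  (A.blk i ∩ A.blk j).ncard = 4 ∧ (A.blk j ∩ A.blk k).ncard = 4 ∧
  (A.blk k ∩ A.blk l).ncard = 4 ∧ (A.blk l ∩ A.blk i).ncard = 4 ∧
  A.blk i ∩ A.blk k = {A.bot, A.top} ∧ A.blk j ∩ A.blk l = {A.bot, A.top} ∧
  A.blk i ∩ A.blk j ∩ A.blk k = {A.bot, A.top} ∧
  A.blk i ∩ A.blk j ∩ A.blk l = {A.bot, A.top} ∧
  A.blk i ∩ A.blk k ∩ A.blk l = {A.bot, A.top} ∧
  A.blk j ∩ A.blk k ∩ A.blk l = {A.bot, A.top}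

end PastedFamily

/-!
Transitivity across two different blocks passes through a shared element, which is `0`, `1`, or
an atom of both blocks or a coatom of both, so one of the two inequalities is trivial.
For paraorthomodularity, if `x ≤ y` holds in a block, the block meet `x' ∧ y` lies in the lower
cone of `x'` and `y` in the amalgam, hence is `0`, and the block's own paraorthomodularity gives
`x = y`.
-/

namespace PastedFamily

variable {K ι : Type*} (A : PastedFamily K ι)

def IsAtomIn (i : ι) (a : K) : Prop := ∀ z ∈ A.blk i, A.le i z a → z = A.bot ∨ z = a

def IsCoatomIn (i : ι) (a : K) : Prop := ∀ z ∈ A.blk i, A.le i a z → z = A.top ∨ z = a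

variable {A}

theorem eq_bot_of_le_bot {i : ι} {x : K} (hx : x ∈ A.blk i) (h : A.le i x A.bot) : x = A.bot :=
  A.le_antisymm' i x A.bot h (A.bot_le i x hx)

theorem eq_top_of_top_le {i : ι} {x : K} (hx : x ∈ A.blk i) (h : A.le i A.top x) : x = A.top :=
  (A.le_antisymm' i A.top x h (A.le_top i x hx)).symm

theorem isAtomIn_or_isCoatomIn {i j : ι} (hij : i ≠ j) {y : K} (hy : y ∈ A.blk i ∩ A.blk j)
    (hyb : y ≠ A.bot) (hyt : y ≠ A.top) :
    (A.IsAtomIn i y ∧ A.IsAtomIn j y) ∨ (A.IsCoatomIn i y ∧ A.IsCoatomIn j y) := by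
  rcases A.inter i j hij with h | ⟨-, -, -, -, -, h⟩
  · rw [h] at hy
    rcases hy with rfl | rfl <;> contradiction
  · rcases h y hy hyb hyt with ⟨⟨-, hi⟩, -, hj⟩ | ⟨⟨-, hi⟩, -, hj⟩
    exacts [Or.inl ⟨hi, hj⟩, Or.inr ⟨hi, hj⟩]

variable (A)

theorem gle_refl (x : K) : A.gle x x :=
  let ⟨i, hi⟩ := A.cover x
  ⟨i, hi, hi, A.le_refl i x hi⟩

theorem bot_gle (x : K) : A.gle A.bot x :=
  let ⟨i, hi⟩ := A.cover x
  ⟨i, A.bot_mem i, hi, A.bot_le i x hi⟩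

theorem gle_top (x : K) : A.gle x A.top :=
  let ⟨i, hi⟩ := A.cover x
  ⟨i, hi, A.top_mem i, A.le_top i x hi⟩

theorem gle_antisymm {x y : K} : A.gle x y → A.gle y x → x = y := by
  rintro ⟨i, hxi, hyi, hxy⟩ ⟨j, hyj, hxj, hyx⟩
  exact A.le_antisymm' i x y hxy (A.le_compat j i y x hyj hxj hyi hxi hyx)

theorem gle_trans {x y z : K} : A.gle x y → A.gle y z → A.gle x z := by
  rintro ⟨i, hxi, hyi, hxy⟩ ⟨j, hyj, hzj, hyz⟩
  obtain rfl | hij := eq_or_ne i j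
  · exact ⟨i, hxi, hzj, A.le_trans' i x y z hxy hyz⟩
  obtain rfl | hyb := eq_or_ne y A.bot
  · rw [eq_bot_of_le_bot hxi hxy]
    exact A.bot_gle z
  obtain rfl | hyt := eq_or_ne y A.top
  · rw [eq_top_of_top_le hzj hyz]
    exact A.gle_top x
  rcases isAtomIn_or_isCoatomIn hij ⟨hyi, hyj⟩ hyb hyt with ⟨hatom, -⟩ | ⟨-, hcoatom⟩
  · rcases hatom x hxi hxy with rfl | rfl
    · exact A.bot_gle z
    · exact ⟨j, hyj, hzj, hyz⟩
  · rcases hcoatom z hzj hyz with rfl | rfl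
    · exact A.gle_top x
    · exact ⟨i, hxi, hyi, hxy⟩

theorem compl_gle_compl {x y : K} : A.gle x y → A.gle (A.compl y) (A.compl x) := by
  rintro ⟨i, hxi, hyi, hxy⟩
  exact ⟨i, A.compl_mem i y hyi, A.compl_mem i x hxi, A.compl_antitone i x y hxi hyi hxy⟩

theorem paraOM : A.ParaOM := by
  rintro x y ⟨i, hxi, hyi, hxy⟩ hcone
  have hx'i := A.compl_mem i x hxi
  have hmi := A.inf_mem i _ _ hx'i hyi
  have hmeet : A.inf i (A.compl x) y = A.bot :=
    hcone _ ⟨i, hmi, hx'i, A.inf_le_left i _ _ hx'i hyi⟩ ⟨i, hmi, hyi, A.inf_le_right i _ _ hx'i hyi⟩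
  exact A.blockParaOM i x y hxi hyi hxy hmeet

end PastedFamily

/-- The atomic amalgam of a pasted family of Kleene lattices is a
paraorthomodular poset: the glued relation is a bounded partial order, the
inherited complementation is an antitone involution for it, and the
paraorthomodular law (P) holds. -/
theorem stmt_10 {K ι : Type*} (A : PastedFamily K ι) :
    (∀ x, A.gle x x) ∧
    (∀ x y, A.gle x y → A.gle y x → x = y) ∧
    (∀ x y z, A.gle x y → A.gle y z → A.gle x z) ∧
    (∀ x, A.gle A.bot x) ∧ (∀ x, A.gle x A.top) ∧
    (∀ x y, A.gle x y → A.gle (A.compl y) (A.compl x)) ∧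
    (∀ x, A.compl (A.compl x) = x) ∧
    A.ParaOM :=
  ⟨A.gle_refl, fun _ _ => A.gle_antisymm, fun _ _ _ => A.gle_trans, A.bot_gle, A.gle_top,
    fun _ _ => A.compl_gle_compl, A.compl_invol, A.paraOM⟩
end

section
/- Let K be an atomic amalgam of a pasted family of Kleene lattices containing no atomic loop of order 3. If x, y lie in a common block K_i, then the join of x and y computed in K_i is the least upper bound of x and y in the amalgam K. -/
/-!
Let `z` be an upper bound of `x` and `y`, say `x ≤ z` in `K_j` and `y ≤ z` in `K_k`. If `x`
and `y` are comparable in `K_i` their join is one of them, and if `z ∈ K_i` the join in `K_i`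
lies below `z`; so assume neither. Then `x, y ∉ {0, 1}` and `z ∉ K_i`, hence `x ∈ K_i ∩ K_j`,
`y ∈ K_k ∩ K_i` and `z ∈ K_j ∩ K_k` are nontrivial. If `j = k` the join in `K_i` agrees with
the join in `K_j`. Otherwise each of the three intersections is `{0, 1, t, t'}` with `t ≠ t'`:
an atom `t = t'` of a Kleene block would, by regularity and distributivity, be comparable with
every element, leaving at most three elements in the block. Since neither `z` nor `z'` lies in
`K_i`, the triple intersection is `{0, 1}`, and `K_i, K_j, K_k` form an atomic loop of order 3.
-/

namespace PastedFamily

variable {K ι : Type*} (A : PastedFamily K ι) {i j k : ι} {t w x y z : K}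

def IsAtomOf (i : ι) (t : K) : Prop :=
  t ≠ A.bot ∧ ∀ z ∈ A.blk i, A.le i z t → z = A.bot ∨ z = t

def IsCoatomOf (i : ι) (t : K) : Prop :=
  t ≠ A.top ∧ ∀ z ∈ A.blk i, A.le i t z → z = A.top ∨ z = t

lemma bot_ne_top (i : ι) : A.bot ≠ A.top := by
  intro h
  have hsub : A.blk i ⊆ {A.bot} := fun w hw =>
    A.le_antisymm' i w A.bot (h ▸ A.le_top i w hw) (A.bot_le i w hw)
  have := Set.ncard_le_ncard hsub (Set.finite_singleton _)
  have := A.card6 i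
  rw [Set.ncard_singleton] at *
  omega

lemma compl_top (i : ι) : A.compl A.top = A.bot := by
  have hm := A.compl_mem i A.bot (A.bot_mem i)
  have h := A.compl_antitone i _ _ hm (A.top_mem i) (A.le_top i _ hm)
  rw [A.compl_invol] at h
  exact A.le_antisymm' i _ _ h (A.bot_le i _ (A.compl_mem i _ (A.top_mem i)))

lemma compl_bot (i : ι) : A.compl A.bot = A.top := by
  rw [← A.compl_top i, A.compl_invol]

lemma compl_injective : Function.Injective A.compl :=
  Function.LeftInverse.injective A.compl_invol

lemma compl_eq_bot_iff (i : ι) : A.compl t = A.bot ↔ t = A.top := by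
  rw [← A.compl_top i, A.compl_injective.eq_iff]

lemma compl_eq_top_iff (i : ι) : A.compl t = A.top ↔ t = A.bot := by
  rw [← A.compl_bot i, A.compl_injective.eq_iff]

lemma sup_eq_or_eq_of_le_or_le (hx : x ∈ A.blk i) (hy : y ∈ A.blk i)
    (h : A.le i x y ∨ A.le i y x) : A.sup i x y = y ∨ A.sup i x y = x := by
  rcases h with h | h
  · exact Or.inl (A.le_antisymm' i _ _ (A.sup_le i x y y hx hy hy h (A.le_refl i y hy))
      (A.le_sup_right i x y hx hy))
  · exact Or.inr (A.le_antisymm' i _ _ (A.sup_le i x y x hx hy hx (A.le_refl i x hx) h)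
      (A.le_sup_left i x y hx hy))

lemma ne_bot_and_ne_top_of_incomparable (hy : y ∈ A.blk i)
    (h : ¬ (A.le i x y ∨ A.le i y x)) : x ≠ A.bot ∧ x ≠ A.top := by
  constructor
  · rintro rfl
    exact h (Or.inl (A.bot_le i y hy))
  · rintro rfl
    exact h (Or.inr (A.le_top i y hy))

lemma isAtomOf_compl (ht : t ∈ A.blk i) (h : A.IsCoatomOf i t) :
    A.IsAtomOf i (A.compl t) := by
  refine ⟨(A.compl_eq_bot_iff i).not.mpr h.1, fun z hz hzt => ?_⟩
  have hle := A.compl_antitone i _ _ hz (A.compl_mem i t ht) hzt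
  rw [A.compl_invol] at hle
  rcases h.2 _ (A.compl_mem i z hz) hle with h' | h'
  · exact Or.inl ((A.compl_eq_top_iff i).mp h')
  · exact Or.inr (by rw [← h', A.compl_invol])

lemma isCoatomOf_compl (ht : t ∈ A.blk i) (h : A.IsAtomOf i t) :
    A.IsCoatomOf i (A.compl t) := by
  refine ⟨(A.compl_eq_top_iff i).not.mpr h.1, fun z hz hzt => ?_⟩
  have hle := A.compl_antitone i _ _ (A.compl_mem i t ht) hz hzt
  rw [A.compl_invol] at hle
  rcases h.2 _ (A.compl_mem i z hz) hle with h' | h'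
  · exact Or.inl ((A.compl_eq_bot_iff i).mp h')
  · exact Or.inr (by rw [← h', A.compl_invol])

lemma le_or_le_of_isAtomOf_of_compl_eq_self (ht : t ∈ A.blk i) (hat : A.IsAtomOf i t)
    (hc : A.compl t = t) (hw : w ∈ A.blk i) : A.le i w t ∨ A.le i t w := by
  by_contra! h
  have hw' := A.compl_mem i w hw
  have hmeet : ∀ v ∈ A.blk i, ¬ A.le i t v → A.inf i t v = A.bot := fun v hv htv =>
    (hat.2 _ (A.inf_mem i t v ht hv) (A.inf_le_left i t v ht hv)).resolve_right
      fun h => htv (h ▸ A.inf_le_right i t v ht hv)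
  have htw' : ¬ A.le i t (A.compl w) := fun h' => h.1 <| by
    simpa only [A.compl_invol, hc] using A.compl_antitone i _ _ ht hw' h'
  -- regularity with `t = t'` gives `t = t ∧ t' ≤ w ∨ w'`
  have hreg : A.le i t (A.sup i w (A.compl w)) := by
    have := A.regular i t w ht hw
    rw [hc] at this
    exact A.le_trans' i _ _ _ (A.le_inf i t t t ht ht ht (A.le_refl i t ht) (A.le_refl i t ht)) this
  have hsup : A.le i t (A.sup i (A.inf i t w) (A.inf i t (A.compl w))) := by
    rw [← A.distrib i t w _ ht hw hw']
    exact A.le_inf i _ _ _ ht (A.sup_mem i w _ hw hw') ht (A.le_refl i t ht) hreg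
  rw [hmeet w hw h.2, hmeet _ hw' htw'] at hsup
  have hb := A.bot_mem i
  exact hat.1 (A.le_antisymm' i _ _
    (A.le_trans' i _ _ _ hsup (A.sup_le i _ _ _ hb hb hb (A.le_refl i _ hb) (A.le_refl i _ hb)))
    (A.bot_le i t ht))

lemma blk_subset_of_isAtomOf_of_compl_eq_self (ht : t ∈ A.blk i) (hat : A.IsAtomOf i t)
    (hc : A.compl t = t) : A.blk i ⊆ {A.bot, t, A.top} := by
  intro w hw
  have hcoat := A.isCoatomOf_compl ht hat
  rw [hc] at hcoat
  rcases A.le_or_le_of_isAtomOf_of_compl_eq_self ht hat hc hw with h | h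
  · rcases hat.2 w hw h with rfl | rfl <;> simp
  · rcases hcoat.2 w hw h with rfl | rfl <;> simp

lemma compl_ne_self_of_isAtomOf (ht : t ∈ A.blk i) (hat : A.IsAtomOf i t) :
    A.compl t ≠ t := by
  intro hc
  have hle := Set.ncard_le_ncard (A.blk_subset_of_isAtomOf_of_compl_eq_self ht hat hc)
    (Set.toFinite _)
  have h3 := Set.ncard_insert_le A.bot {t, A.top}
  have h2 := Set.ncard_insert_le t {A.top}
  have := A.card6 i
  rw [Set.ncard_singleton] at h2
  omega

lemma inter_ne_botTop (hti : t ∈ A.blk i) (htj : t ∈ A.blk j) (hb : t ≠ A.bot)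
    (ht : t ≠ A.top) : A.blk i ∩ A.blk j ≠ {A.bot, A.top} := by
  intro h
  have : t ∈ ({A.bot, A.top} : Set K) := h ▸ ⟨hti, htj⟩
  rcases this with rfl | rfl <;> contradiction

lemma compl_ne_self_of_mem_inter (hij : i ≠ j) (hti : t ∈ A.blk i) (htj : t ∈ A.blk j)
    (hb : t ≠ A.bot) (ht : t ≠ A.top) : A.compl t ≠ t := by
  obtain ⟨-, -, -, -, -, hatomic⟩ :=
    (A.inter i j hij).resolve_left (A.inter_ne_botTop hti htj hb ht)
  rcases hatomic t ⟨hti, htj⟩ hb ht with ⟨hat, -⟩ | ⟨hcoat, -⟩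
  · exact A.compl_ne_self_of_isAtomOf hti hat
  · intro hc
    exact A.compl_ne_self_of_isAtomOf (A.compl_mem i t hti) (A.isAtomOf_compl hti hcoat)
      (by rw [A.compl_invol, hc])

lemma ncard_botTop_compl (i : ι) (hb : t ≠ A.bot) (ht : t ≠ A.top) (hc : A.compl t ≠ t) :
    ({A.bot, A.top, t, A.compl t} : Set K).ncard = 4 := by
  have hcb : A.compl t ≠ A.bot := (A.compl_eq_bot_iff i).not.mpr ht
  have hct : A.compl t ≠ A.top := (A.compl_eq_top_iff i).not.mpr hb
  rw [Set.ncard_insert_of_notMem (by simp [A.bot_ne_top i, hb.symm, hcb.symm]),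
    Set.ncard_insert_of_notMem (by simp [ht.symm, hct.symm]),
    Set.ncard_insert_of_notMem (by simp [hc.symm]), Set.ncard_singleton]

lemma inter_eq_of_mem_inter (hij : i ≠ j) (hti : t ∈ A.blk i) (htj : t ∈ A.blk j)
    (hb : t ≠ A.bot) (ht : t ≠ A.top) :
    A.blk i ∩ A.blk j = {A.bot, A.top, t, A.compl t} := by
  obtain ⟨hle, hbm, htm, hcm, -, -⟩ :=
    (A.inter i j hij).resolve_left (A.inter_ne_botTop hti htj hb ht)
  have hsub : ({A.bot, A.top, t, A.compl t} : Set K) ⊆ A.blk i ∩ A.blk j := by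
    simp only [Set.insert_subset_iff, Set.singleton_subset_iff]
    exact ⟨hbm, htm, ⟨hti, htj⟩, hcm t ⟨hti, htj⟩⟩
  refine (Set.eq_of_subset_of_ncard_le hsub ?_ ((A.finite i).subset Set.inter_subset_left)).symm
  rwa [A.ncard_botTop_compl i hb ht (A.compl_ne_self_of_mem_inter hij hti htj hb ht)]

lemma ncard_inter_eq_four (hij : i ≠ j) (hti : t ∈ A.blk i) (htj : t ∈ A.blk j)
    (hb : t ≠ A.bot) (ht : t ≠ A.top) : (A.blk i ∩ A.blk j).ncard = 4 := by
  rw [A.inter_eq_of_mem_inter hij hti htj hb ht]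
  exact A.ncard_botTop_compl i hb ht (A.compl_ne_self_of_mem_inter hij hti htj hb ht)

lemma sup_eq_sup_of_mem_inter (hxi : x ∈ A.blk i) (hxj : x ∈ A.blk j) (hyi : y ∈ A.blk i)
    (hyj : y ∈ A.blk j) (hb : x ≠ A.bot) (ht : x ≠ A.top) : A.sup i x y = A.sup j x y := by
  rcases eq_or_ne i j with rfl | hij
  · rfl
  obtain ⟨-, -, -, -, hops, -⟩ :=
    (A.inter i j hij).resolve_left (A.inter_ne_botTop hxi hxj hb ht)
  exact (hops x y ⟨hxi, hxj⟩ ⟨hyi, hyj⟩).2.2.1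

lemma inter_inter_eq_botTop (hjk : j ≠ k) (hzj : z ∈ A.blk j) (hzk : z ∈ A.blk k)
    (hb : z ≠ A.bot) (ht : z ≠ A.top) (hzi : z ∉ A.blk i) :
    A.blk i ∩ A.blk j ∩ A.blk k = {A.bot, A.top} := by
  apply subset_antisymm
  · rintro w ⟨⟨hwi, hwj⟩, hwk⟩
    have hw : w ∈ ({A.bot, A.top, z, A.compl z} : Set K) :=
      A.inter_eq_of_mem_inter hjk hzj hzk hb ht ▸ ⟨hwj, hwk⟩
    rcases hw with rfl | rfl | rfl | rfl
    · exact Or.inl rfl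
    · exact Or.inr rfl
    · exact absurd hwi hzi
    · exact absurd (A.compl_invol z ▸ A.compl_mem i _ hwi) hzi
  · simp only [Set.insert_subset_iff, Set.singleton_subset_iff, Set.mem_inter_iff]
    exact ⟨⟨⟨A.bot_mem i, A.bot_mem j⟩, A.bot_mem k⟩,
      ⟨A.top_mem i, A.top_mem j⟩, A.top_mem k⟩

lemma atomicLoop3_of_not_mem (hjk : j ≠ k) (hxi : x ∈ A.blk i) (hxj : x ∈ A.blk j)
    (hxb : x ≠ A.bot) (hxt : x ≠ A.top) (hyk : y ∈ A.blk k) (hyi : y ∈ A.blk i)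
    (hyb : y ≠ A.bot) (hyt : y ≠ A.top) (hzj : z ∈ A.blk j) (hzk : z ∈ A.blk k)
    (hzb : z ≠ A.bot) (hzt : z ≠ A.top) (hzi : z ∉ A.blk i) : A.AtomicLoop3 i j k := by
  have hij : i ≠ j := by
    rintro rfl
    exact hzi hzj
  have hki : k ≠ i := by
    rintro rfl
    exact hzi hzk
  exact ⟨A.ncard_inter_eq_four hij hxi hxj hxb hxt, A.ncard_inter_eq_four hjk hzj hzk hzb hzt,
    A.ncard_inter_eq_four hki hyk hyi hyb hyt, A.inter_inter_eq_botTop hjk hzj hzk hzb hzt hzi⟩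

end PastedFamily

/-- In an atomic amalgam of Kleene lattices with no atomic loop of order 3,
the join of two elements of a common block, computed in that block, is the
least upper bound in the whole amalgam. -/
theorem stmt_12 {K ι : Type*} (A : PastedFamily K ι)
    (hnl : ∀ i j k : ι, ¬ A.AtomicLoop3 i j k)
    (i : ι) (x y : K) (hx : x ∈ A.blk i) (hy : y ∈ A.blk i) :
    A.IsLubA x y (A.sup i x y) := by
  have hs := A.sup_mem i x y hx hy
  refine ⟨⟨i, hx, hs, A.le_sup_left i x y hx hy⟩,
    ⟨i, hy, hs, A.le_sup_right i x y hx hy⟩, ?_⟩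
  rintro z ⟨j, hxj, hzj, hxz⟩ ⟨k, hyk, hzk, hyz⟩
  by_cases hcmp : A.le i x y ∨ A.le i y x
  · rcases A.sup_eq_or_eq_of_le_or_le hx hy hcmp with h | h <;> rw [h]
    exacts [⟨k, hyk, hzk, hyz⟩, ⟨j, hxj, hzj, hxz⟩]
  obtain ⟨hxb, hxt⟩ := A.ne_bot_and_ne_top_of_incomparable hy hcmp
  obtain ⟨hyb, hyt⟩ := A.ne_bot_and_ne_top_of_incomparable hx (by rwa [or_comm])
  by_cases hzi : z ∈ A.blk i
  · exact ⟨i, hs, hzi, A.sup_le i x y z hx hy hzi (A.le_compat j i x z hxj hzj hx hzi hxz)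
      (A.le_compat k i y z hyk hzk hy hzi hyz)⟩
  rcases eq_or_ne j k with rfl | hjk
  · rw [A.sup_eq_sup_of_mem_inter hx hxj hy hyk hxb hxt]
    exact ⟨j, A.sup_mem j x y hxj hyk, hzj, A.sup_le j x y z hxj hyk hzj hxz hyz⟩
  have hzb : z ≠ A.bot := by
    rintro rfl
    exact hxb (A.le_antisymm' j _ _ hxz (A.bot_le j x hxj))
  have hzt : z ≠ A.top := fun h => hzi (h ▸ A.top_mem i)
  exact (hnl i j k <|
    A.atomicLoop3_of_not_mem hjk hx hxj hxb hxt hyk hy hyb hyt hzj hzk hzb hzt hzi).elim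
end

section
/- Let (P, ≤, (ˣ : x ∈ P), 0, 1) be a relatively paraorthomodular mub-complete poset and define x → y := { mʸ | m ∈ Min U(x,y) }. Then x ≤ y if and only if x → y = {1}. -/
/-- The set of minimal elements of the upper cone `U(x,y)`. -/
def MinU {P : Type*} [PartialOrder P] (x y : P) : Set P :=
  {m | x ≤ m ∧ y ≤ m ∧ ∀ z, x ≤ z → y ≤ z → z ≤ m → z = m}

/-- The implication `x → y := { mʸ | m ∈ Min U(x,y) }`, where `c y m` denotes
the sectional involution `ʸ` on `[y,1]` applied to `m`. -/
def rarrow {P : Type*} [PartialOrder P] (c : P → P → P) (x y : P) : Set P :=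
  (fun m => c y m) '' MinU x y

/-!
If `x ≤ y`, then `y` is the only minimal upper bound of `x` and `y`, and `yʸ = 1`. Conversely,
mub-completeness below `1` yields some `m ∈ Min U(x,y)`; from `mʸ = 1` involutivity gives
`m = 1ʸ = y`, so `x ≤ m = y`.
-/

section

variable {P : Type*} [PartialOrder P]

theorem MinU_eq_singleton_of_le {x y : P} (hxy : x ≤ y) : MinU x y = {y} := by
  ext m
  constructor
  · rintro ⟨-, hym, hmin⟩
    exact (hmin y hxy le_rfl hym).symm
  · rintro rfl
    exact ⟨hxy, le_rfl, fun z _ hyz hzy => le_antisymm hzy hyz⟩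

theorem MinU_nonempty [BoundedOrder P]
    (hMub : ∀ (M : Finset P) (x : P), (∀ m ∈ M, m ≤ x) →
      ∃ z, z ≤ x ∧ (∀ m ∈ M, m ≤ z) ∧ ∀ w, (∀ m ∈ M, m ≤ w) → w ≤ z → w = z)
    (x y : P) : (MinU x y).Nonempty := by
  classical
  obtain ⟨z, -, hub, hmin⟩ := hMub {x, y} ⊤ (fun _ _ => le_top)
  refine ⟨z, hub x (by simp), hub y (by simp), fun w hxw hyw hwz => hmin w ?_ hwz⟩
  simpa using And.intro hxw hyw

variable [BoundedOrder P] {c : P → P → P}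

theorem involution_top_eq_self
    (hmem : ∀ x y : P, x ≤ y → x ≤ c x y)
    (hAnti : ∀ x y z : P, x ≤ y → x ≤ z → y ≤ z → c x z ≤ c x y)
    (hInv : ∀ x y : P, x ≤ y → c x (c x y) = y) (y : P) : c y ⊤ = y :=
  le_antisymm
    (calc c y ⊤ ≤ c y (c y y) := hAnti y (c y y) ⊤ (hmem y y le_rfl) le_top le_top
      _ = y := hInv y y le_rfl)
    (hmem y ⊤ le_top)

theorem rarrow_eq_top_of_le
    (hmem : ∀ x y : P, x ≤ y → x ≤ c x y)
    (hAnti : ∀ x y z : P, x ≤ y → x ≤ z → y ≤ z → c x z ≤ c x y)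
    (hInv : ∀ x y : P, x ≤ y → c x (c x y) = y) {x y : P} (hxy : x ≤ y) :
    rarrow c x y = {⊤} := by
  have hself : c y y = ⊤ := by
    simpa only [involution_top_eq_self hmem hAnti hInv y] using hInv y ⊤ le_top
  simp [rarrow, MinU_eq_singleton_of_le hxy, hself]

theorem le_of_rarrow_eq_top
    (hmem : ∀ x y : P, x ≤ y → x ≤ c x y)
    (hAnti : ∀ x y z : P, x ≤ y → x ≤ z → y ≤ z → c x z ≤ c x y)
    (hInv : ∀ x y : P, x ≤ y → c x (c x y) = y)
    (hMub : ∀ (M : Finset P) (x : P), (∀ m ∈ M, m ≤ x) →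
      ∃ z, z ≤ x ∧ (∀ m ∈ M, m ≤ z) ∧ ∀ w, (∀ m ∈ M, m ≤ w) → w ≤ z → w = z)
    {x y : P} (h : rarrow c x y = {⊤}) : x ≤ y := by
  obtain ⟨m, hm⟩ := MinU_nonempty hMub x y
  have hcm : c y m = ⊤ := by
    have himage : c y m ∈ rarrow c x y := Set.mem_image_of_mem (c y) hm
    rwa [h, Set.mem_singleton_iff] at himage
  have hmy : m = y := by
    rw [← hInv y m hm.2.1, hcm, involution_top_eq_self hmem hAnti hInv]
  exact hmy ▸ hm.1

end

theorem stmt_15_general {P : Type*} [PartialOrder P] [BoundedOrder P] (c : P → P → P)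
    (hmem : ∀ x y : P, x ≤ y → x ≤ c x y)
    (hAnti : ∀ x y z : P, x ≤ y → x ≤ z → y ≤ z → c x z ≤ c x y)
    (hInv : ∀ x y : P, x ≤ y → c x (c x y) = y)
    (hMub : ∀ (M : Finset P) (x : P), (∀ m ∈ M, m ≤ x) →
      ∃ z, z ≤ x ∧ (∀ m ∈ M, m ≤ z) ∧ ∀ w, (∀ m ∈ M, m ≤ w) → w ≤ z → w = z)
    (x y : P) :
    x ≤ y ↔ rarrow c x y = {⊤} :=
  ⟨rarrow_eq_top_of_le hmem hAnti hInv, le_of_rarrow_eq_top hmem hAnti hInv hMub⟩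

theorem stmt_15 {P : Type*} [PartialOrder P] [BoundedOrder P] (c : P → P → P)
    (hmem : ∀ x y : P, x ≤ y → x ≤ c x y)
    (hAnti : ∀ x y z : P, x ≤ y → x ≤ z → y ≤ z → c x z ≤ c x y)
    (hInv : ∀ x y : P, x ≤ y → c x (c x y) = y)
    (hRP : ∀ x y z : P, x ≤ y → y ≤ z →
      (∀ w, x ≤ w → w ≤ c x y → w ≤ z → w = x) → y = z)
    (hMub : ∀ (M : Finset P) (x : P), (∀ m ∈ M, m ≤ x) →
      ∃ z, z ≤ x ∧ (∀ m ∈ M, m ≤ z) ∧ ∀ w, (∀ m ∈ M, m ≤ w) → w ≤ z → w = z)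
    (x y : P) :
    x ≤ y ↔ rarrow c x y = {⊤} :=
  stmt_15_general c hmem hAnti hInv hMub x y
end

section
/- Let (P, ≤, (ˣ : x ∈ P), 0, 1) be a relatively paraorthomodular mub-complete poset with x → y := { mʸ | m ∈ Min U(x,y) }. Then (x → y) → y = Min U(x,y) and ((x → y) → y) → y = x → y, where the operator is extended to sets by unions. -/
/-!
For `y ≤ a` the cone `U(a,y)` has `a` as its only minimal element, so `a → y = {aʸ}`.
Every element of `x → y` and of `Min U(x,y)` lies above `y`, hence applying `· → y` to either
set is just taking its image under the involution `ʸ` of `[y,1]`. Since `ʸ` is involutive,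
`(x → y) → y = Min U(x,y)`, and applying `· → y` once more gives `x → y` back.
-/

section

variable {P : Type*} [PartialOrder P] (c : P → P → P) {x y a : P}

theorem minU_eq_singleton_of_le (h : y ≤ a) : MinU a y = {a} := by
  ext n
  constructor
  · rintro ⟨han, -, hmin⟩
    exact (hmin a le_rfl h han).symm
  · rintro rfl
    exact ⟨le_rfl, h, fun z hz _ hzn => le_antisymm hzn hz⟩

theorem rarrow_eq_singleton_of_le (h : y ≤ a) : rarrow c a y = {c y a} := by
  rw [rarrow, minU_eq_singleton_of_le h, Set.image_singleton]

theorem biUnion_rarrow_eq_image {S : Set P} (hS : ∀ a ∈ S, y ≤ a) :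
    ⋃ a ∈ S, rarrow c a y = c y '' S := by
  rw [Set.image_eq_iUnion]
  exact Set.iUnion₂_congr fun a ha => rarrow_eq_singleton_of_le c (hS a ha)

theorem le_of_mem_rarrow (hmem : ∀ x y : P, x ≤ y → x ≤ c x y) (ha : a ∈ rarrow c x y) :
    y ≤ a := by
  obtain ⟨m, hm, rfl⟩ := ha
  exact hmem y m hm.2.1

theorem biUnion_rarrow_rarrow (hmem : ∀ x y : P, x ≤ y → x ≤ c x y)
    (hInv : ∀ x y : P, x ≤ y → c x (c x y) = y) :
    ⋃ a ∈ rarrow c x y, rarrow c a y = MinU x y := by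
  rw [biUnion_rarrow_eq_image c fun a => le_of_mem_rarrow c hmem, rarrow, Set.image_image]
  exact Set.EqOn.image_eq_self fun m hm => hInv y m hm.2.1

theorem biUnion_minU_rarrow : ⋃ a ∈ MinU x y, rarrow c a y = rarrow c x y :=
  biUnion_rarrow_eq_image c fun _ hm => hm.2.1

end

theorem stmt_16_general {P : Type*} [PartialOrder P] (c : P → P → P)
    (hmem : ∀ x y : P, x ≤ y → x ≤ c x y)
    (hInv : ∀ x y : P, x ≤ y → c x (c x y) = y)
    (x y : P) :
    (⋃ a ∈ rarrow c x y, rarrow c a y) = MinU x y ∧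
    (⋃ a ∈ ⋃ a ∈ rarrow c x y, rarrow c a y, rarrow c a y) = rarrow c x y := by
  have hmin := biUnion_rarrow_rarrow c hmem hInv (x := x) (y := y)
  exact ⟨hmin, hmin ▸ biUnion_minU_rarrow c⟩

theorem stmt_16 {P : Type*} [PartialOrder P] [BoundedOrder P] (c : P → P → P)
    (hmem : ∀ x y : P, x ≤ y → x ≤ c x y)
    (hAnti : ∀ x y z : P, x ≤ y → x ≤ z → y ≤ z → c x z ≤ c x y)
    (hInv : ∀ x y : P, x ≤ y → c x (c x y) = y)
    (hRP : ∀ x y z : P, x ≤ y → y ≤ z →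
      (∀ w, x ≤ w → w ≤ c x y → w ≤ z → w = x) → y = z)
    (hMub : ∀ (M : Finset P) (x : P), (∀ m ∈ M, m ≤ x) →
      ∃ z, z ≤ x ∧ (∀ m ∈ M, m ≤ z) ∧ ∀ w, (∀ m ∈ M, m ≤ w) → w ≤ z → w = z)
    (x y : P) :
    (⋃ a ∈ rarrow c x y, rarrow c a y) = MinU x y ∧
    (⋃ a ∈ ⋃ a ∈ rarrow c x y, rarrow c a y, rarrow c a y) = rarrow c x y :=
  stmt_16_general c hmem hInv x y
end

section
/- Let (L, ∨, ∧, ') be a lattice with an antitone involution, and define x ⊙ y := y ∧ (x ∨ y') and x → y := x' ∨ (x ∧ y) (Sasaki projection and Sasaki implication). Then the adjointness condition 'x ⊙ y ≤ z iff x ≤ y → z for all x, y, z' holds if and only if L satisfies both orthomodular identities x ∨ ((x ∨ y) ∧ x') = x ∨ y and x ∧ ((x ∧ y) ∨ x') = x ∧ y. -/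
/-!
Each orthomodular identity is one direction of the adjointness, instantiated where the other side
holds trivially. Conversely, `x ≤ y' ∨ x = y' ∨ (y ∧ (x ∨ y'))` by the join identity and
`y ∧ ((y ∧ z) ∨ y') = y ∧ z` by the meet identity, so each direction of the adjointness follows
from one identity by monotonicity.
-/

section SasakiAdjunction

variable {L : Type*} [Lattice L] {c : L → L}

theorem inf_sup_compl_eq_of_sasaki_adjoint
    (H : ∀ x y z : L, y ⊓ (x ⊔ c y) ≤ z ↔ x ≤ c y ⊔ (y ⊓ z)) (x y : L) :
    x ⊓ ((x ⊓ y) ⊔ c x) = x ⊓ y := by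
  refine le_antisymm ((H (x ⊓ y) x (x ⊓ y)).mpr ?_) (le_inf inf_le_left le_sup_left)
  rw [← inf_assoc, inf_idem]
  exact le_sup_right

theorem sup_inf_compl_eq_of_sasaki_adjoint (hc : Function.Involutive c)
    (H : ∀ x y z : L, y ⊓ (x ⊔ c y) ≤ z ↔ x ≤ c y ⊔ (y ⊓ z)) (x y : L) :
    x ⊔ ((x ⊔ y) ⊓ c x) = x ⊔ y := by
  refine le_antisymm (sup_le le_sup_left inf_le_left) ?_
  have h := (H (x ⊔ y) (c x) (c x ⊓ (x ⊔ y))).mp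
    (inf_le_inf_left _ (by rw [hc]; exact sup_le le_rfl le_sup_left))
  rwa [hc, ← inf_assoc, inf_idem, inf_comm] at h

theorem le_sasaki_imp_of_sasaki_proj_le (hc : Function.Involutive c)
    (hjoin : ∀ x y : L, x ⊔ ((x ⊔ y) ⊓ c x) = x ⊔ y) {x y z : L}
    (h : y ⊓ (x ⊔ c y) ≤ z) : x ≤ c y ⊔ (y ⊓ z) :=
  calc x ≤ c y ⊔ x := le_sup_right
    _ = c y ⊔ (y ⊓ (x ⊔ c y)) := by rw [← hjoin (c y) x, hc, sup_comm x, inf_comm]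
    _ ≤ c y ⊔ (y ⊓ z) := sup_le_sup_left (le_inf inf_le_left h) _

theorem sasaki_proj_le_of_le_sasaki_imp
    (hmeet : ∀ x y : L, x ⊓ ((x ⊓ y) ⊔ c x) = x ⊓ y) {x y z : L}
    (h : x ≤ c y ⊔ (y ⊓ z)) : y ⊓ (x ⊔ c y) ≤ z :=
  calc y ⊓ (x ⊔ c y) ≤ y ⊓ ((y ⊓ z) ⊔ c y) :=
        inf_le_inf_left _ (sup_le (h.trans_eq (sup_comm _ _)) le_sup_right)
    _ = y ⊓ z := hmeet y z
    _ ≤ z := inf_le_right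

end SasakiAdjunction

theorem stmt_17_general {L : Type*} [Lattice L] (c : L → L)
    (hI : ∀ x : L, c (c x) = x) :
    (∀ x y z : L, y ⊓ (x ⊔ c y) ≤ z ↔ x ≤ c y ⊔ (y ⊓ z)) ↔
      ((∀ x y : L, x ⊔ ((x ⊔ y) ⊓ c x) = x ⊔ y) ∧
       (∀ x y : L, x ⊓ ((x ⊓ y) ⊔ c x) = x ⊓ y)) := by
  constructor
  · intro H
    exact ⟨sup_inf_compl_eq_of_sasaki_adjoint hI H, inf_sup_compl_eq_of_sasaki_adjoint H⟩
  · rintro ⟨hjoin, hmeet⟩ x y z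
    exact ⟨le_sasaki_imp_of_sasaki_proj_le hI hjoin, sasaki_proj_le_of_le_sasaki_imp hmeet⟩

/-- In a lattice with antitone involution, with Sasaki projection
`x ⊙ y := y ∧ (x ∨ y')` and Sasaki implication `x → y := x' ∨ (x ∧ y)`,
adjointness holds iff both orthomodular identities hold. -/
theorem stmt_17 {L : Type*} [Lattice L] (c : L → L)
    (hA : ∀ x y : L, x ≤ y → c y ≤ c x) (hI : ∀ x : L, c (c x) = x) :
    (∀ x y z : L, y ⊓ (x ⊔ c y) ≤ z ↔ x ≤ c y ⊔ (y ⊓ z)) ↔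
      ((∀ x y : L, x ⊔ ((x ⊔ y) ⊓ c x) = x ⊔ y) ∧
       (∀ x y : L, x ⊓ ((x ⊓ y) ⊔ c x) = x ⊓ y)) :=
  stmt_17_general c hI
end

section
/- Let (L, ∨, ∧, ', 0, 1) be a bounded lattice with antitone involution, with x ⊙_S y := y ∧ (x ∨ y') and x →_I y := y ∨ (x' ∧ y'). If for all x, y, z, x ⊙_S y ≤ z implies x ≤ y →_I z, then L is orthomodular, i.e., x ≤ y implies y = x ∨ (y ∧ x'). -/
theorem stmt_18_general {L : Type*} [Lattice L] (c : L → L)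
    (hI : ∀ x : L, c (c x) = x)
    (h : ∀ x y z : L, y ⊓ (x ⊔ c y) ≤ z → x ≤ z ⊔ (c y ⊓ c z)) :
    ∀ x y : L, x ≤ y → y = x ⊔ (y ⊓ c x) := by
  intro x y hxy
  refine le_antisymm ?_ (sup_le hxy inf_le_left)
  -- Apply (A) to `y ⊙_S x' ≤ y ∧ x'`; the left side collapses to `y ∧ x'` because `x ≤ y`.
  have hS : c x ⊓ (y ⊔ c (c x)) ≤ y ⊓ c x := by
    rw [hI, sup_eq_left.mpr hxy, inf_comm]
  calc y ≤ (y ⊓ c x) ⊔ (c (c x) ⊓ c (y ⊓ c x)) := h y (c x) (y ⊓ c x) hS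
    _ ≤ (y ⊓ c x) ⊔ x := sup_le_sup_left (by rw [hI]; exact inf_le_left) _
    _ = x ⊔ (y ⊓ c x) := sup_comm _ _

/-- In a bounded lattice with antitone involution, with `x ⊙_S y := y ∧ (x ∨ y')`
and `x →_I y := y ∨ (x' ∧ y')`, condition (A) (`x ⊙_S y ≤ z` implies
`x ≤ y →_I z`) forces orthomodularity. -/
theorem stmt_18 {L : Type*} [Lattice L] [BoundedOrder L] (c : L → L)
    (hA : ∀ x y : L, x ≤ y → c y ≤ c x) (hI : ∀ x : L, c (c x) = x)
    (hbot : c (⊥ : L) = ⊤)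
    (h : ∀ x y z : L, y ⊓ (x ⊔ c y) ≤ z → x ≤ z ⊔ (c y ⊓ c z)) :
    ∀ x y : L, x ≤ y → y = x ⊔ (y ⊓ c x) :=
  stmt_18_general c hI h
end

section
/- Let (L, ∨, ∧, ', 0, 1) be a bounded lattice with antitone involution and define x →_I y := y ∨ (x' ∧ y'). Then there exists a binary operation ⊙ on L with (x ⊙ y ≤ z iff x ≤ y →_I z for all x, y, z) if and only if L is a Boolean algebra (with ' as complementation). -/
/-!
If `⊙` is residuated then `z ↦ y →_I z` is monotone, being an upper adjoint. Comparing its values at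
`⊥ ≤ z` for `y = a'` gives `a ≤ z ⊔ (a ⊓ z')` for all `a, z`. For `a = ⊤` this says `z ⊔ z' = ⊤`, and
for `a` disjoint from `z'` it says `a ≤ z`; so `'` is a complementation. Distributivity follows: the
part `e` of `x ⊓ (y ⊔ z)` outside `(x ⊓ y) ⊔ (x ⊓ z)` is disjoint from `y` and from `z`, hence lies
below `y' ⊓ z' ≤ (y ⊔ z)'` as well as below `y ⊔ z`, so `e = ⊥`.
Conversely, in a Boolean algebra `y →_I z = y' ⊔ z`, whose lower adjoint is `x ⊙ y = x ⊓ y`.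
-/

open Function

/-- The paper's `x →_I y`, with `c` for the involution `'`. -/
def impI {L : Type*} [Lattice L] (c : L → L) (x y : L) : L := y ⊔ (c x ⊓ c y)

section AntitoneInvolution

variable {L : Type*} [Lattice L] {c : L → L}

theorem Antitone.inf_le_map_sup_of_involutive (hA : Antitone c) (hI : Involutive c) (y z : L) :
    c y ⊓ c z ≤ c (y ⊔ z) := by
  have hy : y ≤ c (c y ⊓ c z) := by simpa only [hI y] using hA (inf_le_left : c y ⊓ c z ≤ c y)
  have hz : z ≤ c (c y ⊓ c z) := by simpa only [hI z] using hA (inf_le_right : c y ⊓ c z ≤ c z)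
  simpa only [hI _] using hA (sup_le hy hz)

variable [BoundedOrder L]

theorem Antitone.map_bot_of_involutive (hA : Antitone c) (hI : Involutive c) : c ⊥ = ⊤ :=
  top_le_iff.mp (hI ⊤ ▸ hA bot_le)

theorem Antitone.map_top_of_involutive (hA : Antitone c) (hI : Involutive c) : c ⊤ = ⊥ := by
  rw [← hA.map_bot_of_involutive hI, hI]

theorem Antitone.inf_map_eq_bot_of_involutive (hA : Antitone c) (hI : Involutive c)
    (hsup : ∀ z : L, z ⊔ c z = ⊤) (z : L) : z ⊓ c z = ⊥ :=
  le_bot_iff.mp <| calc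
    z ⊓ c z = c (c z) ⊓ c z := by rw [hI]
    _ ≤ c (c z ⊔ z) := hA.inf_le_map_sup_of_involutive hI _ _
    _ = ⊥ := by rw [sup_comm, hsup, hA.map_top_of_involutive hI]

theorem le_sup_inf_map_of_monotone_impI (hA : Antitone c) (hI : Involutive c)
    (hmono : ∀ y, Monotone (impI c y)) (a z : L) : a ≤ z ⊔ (a ⊓ c z) := by
  have := hmono (c a) (bot_le : ⊥ ≤ z)
  rwa [impI, impI, hI, hA.map_bot_of_involutive hI, inf_top_eq, bot_sup_eq] at this

theorem sup_map_eq_top_of_le_sup_inf_map (hS : ∀ a z : L, a ≤ z ⊔ (a ⊓ c z)) (z : L) :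
    z ⊔ c z = ⊤ :=
  top_le_iff.mp (by simpa only [top_inf_eq] using hS ⊤ z)

theorem le_map_of_inf_eq_bot_of_le_sup_inf_map (hS : ∀ a z : L, a ≤ z ⊔ (a ⊓ c z))
    (hI : Involutive c) {u v : L} (huv : u ⊓ v = ⊥) : u ≤ c v := by
  simpa only [hI v, huv, sup_bot_eq] using hS u (c v)

theorem inf_sup_le_of_le_sup_inf_map (hS : ∀ a z : L, a ≤ z ⊔ (a ⊓ c z)) (hA : Antitone c)
    (hI : Involutive c) (x y z : L) :
    x ⊓ (y ⊔ z) ≤ x ⊓ y ⊔ x ⊓ z := by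
  set d := x ⊓ y ⊔ x ⊓ z
  set e := x ⊓ (y ⊔ z) ⊓ c d
  have hinf := hA.inf_map_eq_bot_of_involutive hI (sup_map_eq_top_of_le_sup_inf_map hS)
  have le_map_of_le {w : L} (hw : x ⊓ w ≤ d) : e ≤ c w := by
    refine le_map_of_inf_eq_bot_of_le_sup_inf_map hS hI (le_bot_iff.mp ?_)
    calc e ⊓ w ≤ d ⊓ c d :=
          le_inf ((inf_le_inf_right w (inf_le_left.trans inf_le_left)).trans hw)
            (inf_le_left.trans inf_le_right)
      _ = ⊥ := hinf d
  have he : e = ⊥ := le_bot_iff.mp <| calc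
    e ≤ (y ⊔ z) ⊓ c (y ⊔ z) :=
      le_inf (inf_le_left.trans inf_le_right)
        ((le_inf (le_map_of_le le_sup_left) (le_map_of_le le_sup_right)).trans
          (hA.inf_le_map_sup_of_involutive hI y z))
    _ = ⊥ := hinf _
  calc x ⊓ (y ⊔ z) ≤ d ⊔ e := hS _ d
    _ = d := by rw [he, sup_bot_eq]

end AntitoneInvolution

theorem inf_le_iff_le_impI {L : Type*} [DistribLattice L] [BoundedOrder L] {c : L → L}
    (hc : ∀ y, IsCompl y (c y)) (x y z : L) : x ⊓ y ≤ z ↔ x ≤ impI c y z := by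
  rw [impI, sup_inf_left, (hc z).sup_eq_top, inf_top_eq, (hc y).le_sup_right_iff_inf_left_le]

/-- In a bounded lattice with antitone involution, with
`x →_I y := y ∨ (x' ∧ y')`, there is a binary operation `⊙` adjoint to `→_I`
iff the lattice is a Boolean algebra (distributive, with `'` a complementation). -/
theorem stmt_19 {L : Type*} [Lattice L] [BoundedOrder L] (c : L → L)
    (hA : ∀ x y : L, x ≤ y → c y ≤ c x) (hI : ∀ x : L, c (c x) = x) :
    (∃ odot : L → L → L, ∀ x y z : L, odot x y ≤ z ↔ x ≤ z ⊔ (c y ⊓ c z)) ↔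
      ((∀ x y z : L, x ⊓ (y ⊔ z) = (x ⊓ y) ⊔ (x ⊓ z)) ∧
       (∀ x : L, x ⊓ c x = ⊥ ∧ x ⊔ c x = ⊤)) := by
  constructor
  · rintro ⟨odot, hodot⟩
    have hS := le_sup_inf_map_of_monotone_impI hA hI fun y =>
      GaloisConnection.monotone_u fun x z => hodot x y z
    have hsup := sup_map_eq_top_of_le_sup_inf_map hS
    exact ⟨fun x y z => le_antisymm (inf_sup_le_of_le_sup_inf_map hS hA hI x y z) le_inf_sup,
      fun x => ⟨Antitone.inf_map_eq_bot_of_involutive hA hI hsup x, hsup x⟩⟩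
  · rintro ⟨hdist, hcomp⟩
    let _ := DistribLattice.ofInfSupLe fun x y z => (hdist x y z).le
    exact ⟨(· ⊓ ·), inf_le_iff_le_impI fun y => IsCompl.of_eq (hcomp y).1 (hcomp y).2⟩
end
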